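/- The periodic points of G_¬ are dense in (X, d): for every point X ∈ X and every ε > 0, there exists a point P ∈ X and an integer p ≥ 1 with G_¬^p(P) = P and d(X,P) < ε. -/

import Mathlib

noncomputable def de (n : ℕ) (E F : Fin n → Bool) : ℝ :=
  ∑ k : Fin n, if E k = F k then 0 else 1

noncomputable def ds (n : ℕ) (S T : ℕ → Fin n) : ℝ :=
  (9 / (n : ℝ)) * ∑' k : ℕ, |((S k : ℕ) : ℝ) - ((T k : ℕ) : ℝ)| / 10 ^ (k + 1)

noncomputable def dX (n : ℕ) (X Y : (ℕ → Fin n) × (Fin n → Bool)) : ℝ :=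
  de n X.2 Y.2 + ds n X.1 Y.1

def Ff (n : ℕ) (f : (Fin n → Bool) → Fin n → Bool) (i : Fin n) (x : Fin n → Bool) :
    Fin n → Bool :=
  Function.update x i (f x i)

def Gf (n : ℕ) (f : (Fin n → Bool) → Fin n → Bool)
    (X : (ℕ → Fin n) × (Fin n → Bool)) : (ℕ → Fin n) × (Fin n → Bool) :=
  (fun t => X.1 (t + 1), Ff n f (X.1 0) X.2)

def Gneg (n : ℕ) : (ℕ → Fin n) × (Fin n → Bool) → (ℕ → Fin n) × (Fin n → Bool) :=
  Gf n (fun x i => !(x i))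

/-! Given `X = (S, x)`, let `P = (S', x)` where `S'` repeats the first `N` terms of `S`
forever. After `N` steps from `(S', y)` the configuration is `v xor y` for a mask `v` depending
only on those `N` terms, and the strategy is `S'` again; so `2N` steps apply `v` twice and return
to `P`. As `P` agrees with `X` on the configuration and on the first `N` terms of the strategy,
`d(X, P) ≤ 10⁻ᴺ`. -/

section Dynamics

variable {n : ℕ}

lemma Gneg_iterate_eq_xor (N : ℕ) (S : ℕ → Fin n) :
    ∃ v : Fin n → Bool, ∀ x : Fin n → Bool,
      (Gneg n)^[N] (S, x) = (fun t => S (t + N), fun j => xor (v j) (x j)) := by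
  induction N generalizing S with
  | zero => exact ⟨fun _ => false, fun x => by simp⟩
  | succ N ih =>
    obtain ⟨v, hv⟩ := ih (fun t => S (t + 1))
    refine ⟨fun j => xor (v j) (decide (j = S 0)), fun x => ?_⟩
    rw [Function.iterate_succ_apply]
    change (Gneg n)^[N] (fun t => S (t + 1), Function.update x (S 0) (!x (S 0))) = _
    rw [hv]
    refine Prod.ext (funext fun t => by simp only [add_assoc]) ?_
    funext j
    by_cases h : j = S 0
    · subst h; simp
    · simp [h]

lemma Gneg_isPeriodicPt_of_periodic {S : ℕ → Fin n} {N : ℕ} (hS : Function.Periodic S N)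
    (x : Fin n → Bool) : Function.IsPeriodicPt (Gneg n) (2 * N) (S, x) := by
  obtain ⟨v, hv⟩ := Gneg_iterate_eq_xor N S
  have hshift : (fun t => S (t + N)) = S := funext hS
  change (Gneg n)^[2 * N] (S, x) = (S, x)
  rw [two_mul, Function.iterate_add_apply, hv, hshift, hv, hshift]
  simp

end Dynamics

section Metric

variable {n : ℕ}

lemma de_self (x : Fin n → Bool) : de n x x = 0 := by
  simp [de]

lemma ds_le_of_eq_of_lt {S T : ℕ → Fin n} {N : ℕ} (hST : ∀ k < N, S k = T k) :
    ds n S T ≤ (1 / 10) ^ N := by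
  rcases Nat.eq_zero_or_pos n with rfl | hn
  · simp [ds] -- `9 / 0 = 0` in ℝ
  set f : ℕ → ℝ := fun k => |((S k : ℕ) : ℝ) - ((T k : ℕ) : ℝ)| / 10 ^ (k + 1) with hf
  have hfg : ∀ k, f k ≤ n * (1 / 10) ^ (k + 1) := fun k => by
    have hST : |((S k : ℕ) : ℝ) - ((T k : ℕ) : ℝ)| ≤ n :=
      abs_sub_le_of_nonneg_of_le (by positivity) (by exact_mod_cast (S k).isLt.le)
        (by positivity) (by exact_mod_cast (T k).isLt.le)
    rw [one_div, inv_pow, ← div_eq_mul_inv]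
    exact div_le_div_of_nonneg_right hST (by positivity)
  have hgeom : Summable fun k : ℕ => (n : ℝ) * (1 / 10) ^ (k + 1) :=
    ((summable_geometric_of_lt_one (by norm_num) (by norm_num)).comp_injective
      (add_left_injective 1)).mul_left _
  have hsum : Summable f := Summable.of_nonneg_of_le (fun k => by positivity) hfg hgeom
  have hhead : ∑ k ∈ Finset.range N, f k = 0 :=
    Finset.sum_eq_zero fun k hk => by simp [hf, hST k (Finset.mem_range.mp hk)]
  have htail : ∑' k, f (k + N) ≤ n * (1 / 10) ^ N / 9 := calc
    ∑' k, f (k + N) ≤ ∑' k : ℕ, (n : ℝ) * (1 / 10) ^ (k + N + 1) :=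
      (hsum.comp_injective (add_left_injective N)).tsum_le_tsum (fun k => hfg (k + N))
        (hgeom.comp_injective (add_left_injective N))
    _ = n * (1 / 10) ^ N / 9 := by
      simp_rw [pow_add, ← mul_assoc, mul_right_comm _ ((1 / 10 : ℝ) ^ N), tsum_mul_right,
        tsum_mul_left, tsum_geometric_of_lt_one (by norm_num : (0 : ℝ) ≤ 1 / 10) (by norm_num)]
      ring
  calc ds n S T = 9 / n * ∑' k, f (k + N) := by
        rw [ds, ← hsum.sum_add_tsum_nat_add N, hhead, zero_add]
    _ ≤ 9 / n * (n * (1 / 10) ^ N / 9) := by gcongr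
    _ = (1 / 10) ^ N := by field_simp

end Metric

theorem stmt4_general (n : ℕ) :
    ∀ X : (ℕ → Fin n) × (Fin n → Bool), ∀ ε > (0 : ℝ),
      ∃ P : (ℕ → Fin n) × (Fin n → Bool), ∃ p : ℕ, 1 ≤ p ∧
        (Gneg n)^[p] P = P ∧ dX n X P < ε := by
  intro X ε hε
  obtain ⟨N, hN⟩ := exists_pow_lt_of_lt_one hε (by norm_num : (1 / 10 : ℝ) < 1)
  set S : ℕ → Fin n := fun t => X.1 (t % (N + 1))
  have hS : Function.Periodic S (N + 1) := (Nat.periodic_mod (N + 1)).comp X.1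
  refine ⟨(S, X.2), 2 * (N + 1), by omega, Gneg_isPeriodicPt_of_periodic hS X.2, ?_⟩
  calc dX n X (S, X.2) = ds n X.1 S := by rw [dX, de_self, zero_add]
    _ ≤ (1 / 10) ^ (N + 1) := ds_le_of_eq_of_lt fun k hk => by simp [S, Nat.mod_eq_of_lt hk]
    _ ≤ (1 / 10) ^ N := pow_le_pow_of_le_one (by norm_num) (by norm_num) N.le_succ
    _ < ε := hN

theorem stmt4 (n : ℕ) (hn : 1 ≤ n) :
    ∀ X : (ℕ → Fin n) × (Fin n → Bool), ∀ ε > (0 : ℝ),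
      ∃ P : (ℕ → Fin n) × (Fin n → Bool), ∃ p : ℕ, 1 ≤ p ∧
        (Gneg n)^[p] P = P ∧ dX n X P < ε :=
  stmt4_general n
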